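/- arXiv:1710.03123 — 2 statements merged into one kernel-verified Lean document; each statement's English description precedes it below -/
import Mathlib

section
/- Let H be a complex Hilbert space, B a bounded sesquilinear form with continuity constant C_B, and V a closed subspace on which B is inf-sup stable with constant γ > 0 (and nondegenerate in the transposed sense on V). Let K, K_m : V → H be linear maps with ‖(K − K_m) v‖ ≤ ε ‖v‖ and ‖(id + K_m) v‖ ≤ C₀ ‖v‖ for all v ∈ V, where here 'B inf-sup stable on the corrected space' means: for all v ∈ V \\ {0}, sup_{ψ ∈ V \\ {0}} |B ((id+K)v) ((id+K)ψ)| / (‖v‖‖ψ‖) ≥ γ, and ‖(id+K)ψ‖ ≤ C₁ ‖ψ‖. Then for ε small enough (ε C_B (C₀ + C₁) < γ/2), the perturbed form satisfies: for all v ∈ V \\ {0}, sup_{ψ ∈ V \\ {0}} |B ((id+K_m)v) ((id+K_m)ψ)| / (‖v‖‖ψ‖) ≥ γ − ε C_B (C₀ + C₁) > 0. -/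
/-!
The two corrected forms differ by
`B (P v) (P ψ) - B (Q v) (Q ψ) = B (P v - Q v) (P ψ) + B (Q v) (P ψ - Q ψ)`
with `P = id + K`, `Q = id + K_m`, so continuity of `B` bounds the difference by
`ε C_B (C₁ + C₀) ‖v‖ ‖ψ‖`. Dividing by `‖v‖ ‖ψ‖`, every inf-sup quotient of `P` exceeds the
corresponding quotient of `Q` by at most `δ = ε C_B (C₀ + C₁)`, so the supremum over `ψ` drops
by at most `δ`, while `δ < γ / 2` keeps `γ - δ` positive.
-/

theorem LinearMap.apply₂_sub_apply₂ {R R₂ S S₂ : Type*} [Semiring R] [Semiring R₂] [Semiring S]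
    [Semiring S₂] {E F G : Type*} [AddCommGroup E] [AddCommGroup F] [AddCommGroup G] [Module R E]
    [Module S F] [Module R₂ G] [Module S₂ G] [SMulCommClass S₂ R₂ G] {ρ : R →+* R₂}
    {σ : S →+* S₂} (B : E →ₛₗ[ρ] F →ₛₗ[σ] G) (x x' : E) (y y' : F) :
    B x y - B x' y' = B (x - x') y + B x' (y - y') := by
  rw [LinearMap.map_sub₂, map_sub]
  abel

section BoundedBilinear

variable {R R₂ S S₂ : Type*} [Semiring R] [Semiring R₂] [Semiring S] [Semiring S₂]
  {E F G : Type*} [SeminormedAddCommGroup E] [SeminormedAddCommGroup F]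
  [SeminormedAddCommGroup G] [Module R E] [Module S F] [Module R₂ G] [Module S₂ G]
  [SMulCommClass S₂ R₂ G] {ρ : R →+* R₂} {σ : S →+* S₂}
  {B : E →ₛₗ[ρ] F →ₛₗ[σ] G} {CB : ℝ}

theorem LinearMap.norm_apply₂_le_of_le (hB : ∀ x y, ‖B x y‖ ≤ CB * ‖x‖ * ‖y‖) (hCB : 0 ≤ CB)
    {x : E} {y : F} {r s : ℝ} (hx : ‖x‖ ≤ r) (hy : ‖y‖ ≤ s) :
    ‖B x y‖ ≤ CB * r * s :=
  (hB x y).trans <| mul_le_mul (mul_le_mul_of_nonneg_left hx hCB) hy (norm_nonneg y)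
    (mul_nonneg hCB ((norm_nonneg x).trans hx))

end BoundedBilinear

section InfSup

variable {R R₂ S S₂ : Type*} [Semiring R] [Semiring R₂] [Semiring S] [Semiring S₂]
  {E G X : Type*} [SeminormedAddCommGroup E] [SeminormedAddCommGroup G]
  [SeminormedAddCommGroup X] [Module R E] [Module S E] [Module R₂ G] [Module S₂ G]
  [SMulCommClass S₂ R₂ G] {ρ : R →+* R₂} {σ : S →+* S₂}
  {B : E →ₛₗ[ρ] E →ₛₗ[σ] G} {CB : ℝ} {P Q : X → E} {ε C₀ C₁ : ℝ}

theorem norm_apply₂_div_le (hB : ∀ x y, ‖B x y‖ ≤ CB * ‖x‖ * ‖y‖) (hCB : 0 ≤ CB)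
    (hQ : ∀ x, ‖Q x‖ ≤ C₀ * ‖x‖) (x y : X) :
    ‖B (Q x) (Q y)‖ / (‖x‖ * ‖y‖) ≤ CB * C₀ * C₀ := by
  rcases (mul_nonneg (norm_nonneg x) (norm_nonneg y)).eq_or_lt with hxy | hxy
  · rw [← hxy, div_zero]
    nlinarith [mul_self_nonneg C₀]
  · rw [div_le_iff₀ hxy]
    calc ‖B (Q x) (Q y)‖ ≤ CB * (C₀ * ‖x‖) * (C₀ * ‖y‖) :=
          LinearMap.norm_apply₂_le_of_le hB hCB (hQ x) (hQ y)
      _ = CB * C₀ * C₀ * (‖x‖ * ‖y‖) := by ring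

theorem norm_apply₂_le_add_of_perturb (hB : ∀ x y, ‖B x y‖ ≤ CB * ‖x‖ * ‖y‖) (hCB : 0 ≤ CB)
    (hPQ : ∀ x, ‖P x - Q x‖ ≤ ε * ‖x‖) (hQ : ∀ x, ‖Q x‖ ≤ C₀ * ‖x‖)
    (hP : ∀ x, ‖P x‖ ≤ C₁ * ‖x‖) (x y : X) :
    ‖B (P x) (P y)‖ ≤ ‖B (Q x) (Q y)‖ + ε * CB * (C₀ + C₁) * (‖x‖ * ‖y‖) := by
  have hdiff : ‖B (P x) (P y) - B (Q x) (Q y)‖ ≤ ε * CB * (C₀ + C₁) * (‖x‖ * ‖y‖) :=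
    calc ‖B (P x) (P y) - B (Q x) (Q y)‖
        ≤ ‖B (P x - Q x) (P y)‖ + ‖B (Q x) (P y - Q y)‖ := by
          rw [LinearMap.apply₂_sub_apply₂]
          exact norm_add_le _ _
      _ ≤ CB * (ε * ‖x‖) * (C₁ * ‖y‖) + CB * (C₀ * ‖x‖) * (ε * ‖y‖) :=
          add_le_add (LinearMap.norm_apply₂_le_of_le hB hCB (hPQ x) (hP y))
            (LinearMap.norm_apply₂_le_of_le hB hCB (hQ x) (hPQ y))
      _ = ε * CB * (C₀ + C₁) * (‖x‖ * ‖y‖) := by ring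
  linarith [norm_le_norm_add_norm_sub' (B (P x) (P y)) (B (Q x) (Q y))]

theorem norm_apply₂_div_le_add_of_perturb (hB : ∀ x y, ‖B x y‖ ≤ CB * ‖x‖ * ‖y‖)
    (hCB : 0 ≤ CB) (hPQ : ∀ x, ‖P x - Q x‖ ≤ ε * ‖x‖) (hQ : ∀ x, ‖Q x‖ ≤ C₀ * ‖x‖)
    (hP : ∀ x, ‖P x‖ ≤ C₁ * ‖x‖) {x : X} (hx : 0 < ‖x‖) (y : X) :
    ‖B (P x) (P y)‖ / (‖x‖ * ‖y‖) ≤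
      ‖B (Q x) (Q y)‖ / (‖x‖ * ‖y‖) + ε * CB * (C₀ + C₁) := by
  rcases (mul_nonneg (norm_nonneg x) (norm_nonneg y)).eq_or_lt with hxy | hxy
  · -- here `‖y‖ = 0`; the constants bound norms at `x`, where `0 < ‖x‖`, so they are nonnegative
    have hε := nonneg_of_mul_nonneg_left ((norm_nonneg _).trans (hPQ x)) hx
    have hC₀ := nonneg_of_mul_nonneg_left ((norm_nonneg _).trans (hQ x)) hx
    have hC₁ := nonneg_of_mul_nonneg_left ((norm_nonneg _).trans (hP x)) hx
    rw [← hxy, div_zero, div_zero, zero_add]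
    positivity
  · rw [div_add' _ _ _ hxy.ne', div_le_div_iff_of_pos_right hxy]
    exact norm_apply₂_le_add_of_perturb hB hCB hPQ hQ hP x y

theorem ciSup_norm_apply₂_div_le_add_of_perturb (hB : ∀ x y, ‖B x y‖ ≤ CB * ‖x‖ * ‖y‖)
    (hCB : 0 ≤ CB) (hPQ : ∀ x, ‖P x - Q x‖ ≤ ε * ‖x‖) (hQ : ∀ x, ‖Q x‖ ≤ C₀ * ‖x‖)
    (hP : ∀ x, ‖P x‖ ≤ C₁ * ‖x‖) {x : X} (hx : 0 < ‖x‖) :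
    ⨆ y, ‖B (P x) (P y)‖ / (‖x‖ * ‖y‖) ≤
      (⨆ y, ‖B (Q x) (Q y)‖ / (‖x‖ * ‖y‖)) + ε * CB * (C₀ + C₁) := by
  have hbdd : BddAbove (Set.range fun y => ‖B (Q x) (Q y)‖ / (‖x‖ * ‖y‖)) :=
    ⟨CB * C₀ * C₀, Set.forall_mem_range.2 (norm_apply₂_div_le hB hCB hQ x)⟩
  exact ciSup_le fun y => (norm_apply₂_div_le_add_of_perturb hB hCB hPQ hQ hP hx y).trans
    (add_le_add_left (le_ciSup hbdd y) _)

end InfSup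

theorem perturbed_infsup_general
    {H : Type*} [NormedAddCommGroup H] [InnerProductSpace ℂ H]
    (B : H →ₗ[ℂ] H →ₗ⋆[ℂ] ℂ) (CB : ℝ) (hCB : 0 ≤ CB)
    (hB : ∀ v w : H, ‖B v w‖ ≤ CB * ‖v‖ * ‖w‖)
    (V : Submodule ℂ H)
    (γ : ℝ) (hγ : 0 < γ)
    (K Km : V →ₗ[ℂ] H)
    (ε : ℝ)
    (hKdiff : ∀ v : V, ‖K v - Km v‖ ≤ ε * ‖(v : H)‖)
    (C₀ : ℝ) (hKm : ∀ v : V, ‖(v : H) + Km v‖ ≤ C₀ * ‖(v : H)‖)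
    (C₁ : ℝ) (hK : ∀ ψ : V, ‖(ψ : H) + K ψ‖ ≤ C₁ * ‖(ψ : H)‖)
    (hinfsup : ∀ v : V, (v : H) ≠ 0 →
      γ ≤ ⨆ ψ : V, ‖B ((v : H) + K v) ((ψ : H) + K ψ)‖ / (‖(v : H)‖ * ‖(ψ : H)‖))
    (hsmall : ε * CB * (C₀ + C₁) < γ / 2) :
    (0 < γ - ε * CB * (C₀ + C₁)) ∧
      ∀ v : V, (v : H) ≠ 0 →
        γ - ε * CB * (C₀ + C₁) ≤
          ⨆ ψ : V, ‖B ((v : H) + Km v) ((ψ : H) + Km ψ)‖ / (‖(v : H)‖ * ‖(ψ : H)‖) := by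
  refine ⟨by linarith, fun v hv => ?_⟩
  have hPQ : ∀ u : V, ‖((u : H) + K u) - ((u : H) + Km u)‖ ≤ ε * ‖u‖ := fun u => by
    rw [add_sub_add_left_eq_sub]
    exact hKdiff u
  have hv_pos : 0 < ‖(v : H)‖ := norm_pos_iff.2 hv
  exact sub_le_iff_le_add.2 <| (hinfsup v hv).trans <|
    ciSup_norm_apply₂_div_le_add_of_perturb hB hCB hPQ hKm hK hv_pos

/-- Abstract perturbation of inf-sup stability: if the corrected form with `K` is
inf-sup stable with constant `γ` and `K_m` is an `ε`-perturbation of `K`, then for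
`ε C_B (C₀ + C₁) < γ/2` the form with `K_m` is inf-sup stable with constant
`γ − ε C_B (C₀ + C₁) > 0`. -/
theorem perturbed_infsup
    {H : Type*} [NormedAddCommGroup H] [InnerProductSpace ℂ H] [CompleteSpace H]
    (B : H →ₗ[ℂ] H →ₗ⋆[ℂ] ℂ) (CB : ℝ) (hCB : 0 ≤ CB)
    (hB : ∀ v w : H, ‖B v w‖ ≤ CB * ‖v‖ * ‖w‖)
    (V : Submodule ℂ H) (hV : IsClosed (V : Set H))
    (γ : ℝ) (hγ : 0 < γ)
    (K Km : V →ₗ[ℂ] H)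
    (ε : ℝ) (hε : 0 ≤ ε)
    (hKdiff : ∀ v : V, ‖K v - Km v‖ ≤ ε * ‖(v : H)‖)
    (C₀ : ℝ) (hKm : ∀ v : V, ‖(v : H) + Km v‖ ≤ C₀ * ‖(v : H)‖)
    (C₁ : ℝ) (hK : ∀ ψ : V, ‖(ψ : H) + K ψ‖ ≤ C₁ * ‖(ψ : H)‖)
    (hinfsup : ∀ v : V, (v : H) ≠ 0 →
      γ ≤ ⨆ ψ : V, ‖B ((v : H) + K v) ((ψ : H) + K ψ)‖ / (‖(v : H)‖ * ‖(ψ : H)‖))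
    (hsmall : ε * CB * (C₀ + C₁) < γ / 2) :
    (0 < γ - ε * CB * (C₀ + C₁)) ∧
      ∀ v : V, (v : H) ≠ 0 →
        γ - ε * CB * (C₀ + C₁) ≤
          ⨆ ψ : V, ‖B ((v : H) + Km v) ((ψ : H) + Km ψ)‖ / (‖(v : H)‖ * ‖(ψ : H)‖) :=
  perturbed_infsup_general B CB hCB hB V γ hγ K Km ε hKdiff C₀ hKm C₁ hK hinfsup hsmall
end

section
/- Let H be a complex Hilbert space, W ⊆ H closed, B bounded sesquilinear on H and inf-sup stable on W with constant α. Let G : H' → W be the Corrector Green's operator. Suppose moreover that for source functionals F of the special form F ψ = ⟨f, ψ⟩ with f in a dense subspace D equipped with a stronger norm ‖f‖_D, one has |F w| ≤ C H ‖f‖_D ‖w‖ for all w ∈ W. Then ‖G F‖ ≤ C H α⁻¹ ‖f‖_D, and if additionally ‖w‖_* ≤ C' H ‖w‖ for all w ∈ W, then ‖G F‖_* ≤ C C' H² α⁻¹ ‖f‖_D. -/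
/-- Abstract corrector estimates for divergence-conforming sources: if the source
functional is of size `C H ‖f‖_D` on the kernel space `W`, then the corrector is of
size `O(H)` in energy and `O(H²)` in the weak norm `‖·‖_*`. -/
theorem corrector_estimates_div_source
    {E : Type*} [NormedAddCommGroup E] [InnerProductSpace ℂ E] [CompleteSpace E]
    (W : Submodule ℂ E) (hWc : IsClosed (W : Set E))
    (B : E →ₗ[ℂ] E →ₗ⋆[ℂ] ℂ) (CB : ℝ)
    (hB : ∀ v w : E, ‖B v w‖ ≤ CB * ‖v‖ * ‖w‖)
    (α : ℝ) (hα : 0 < α)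
    (hinfsupW : ∀ v ∈ W, ∃ φ ∈ W, φ ≠ 0 ∧ α * ‖v‖ * ‖φ‖ ≤ ‖B v φ‖)
    (F : E → ℂ) (fD : ℝ) (hfD : 0 ≤ fD)
    (C h : ℝ) (hC : 0 < C) (hh : 0 < h)
    (hF : ∀ w ∈ W, ‖F w‖ ≤ C * h * fD * ‖w‖)
    (N : E → ℝ) (C' : ℝ) (hC' : 0 < C')
    (hN : ∀ w ∈ W, N w ≤ C' * h * ‖w‖)
    (GF : E) (hGFW : GF ∈ W) (hGF : ∀ w ∈ W, B GF w = F w) :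
    ‖GF‖ ≤ C * h * α⁻¹ * fD ∧ N GF ≤ C * C' * h ^ 2 * α⁻¹ * fD := by
  have h1 : ‖GF‖ ≤ C * h * α⁻¹ * fD := by
    obtain ⟨φ, hφW, hφ0, hle⟩ := hinfsupW GF hGFW
    have hφn : 0 < ‖φ‖ := norm_pos_iff.mpr hφ0
    have : α * ‖GF‖ * ‖φ‖ ≤ C * h * fD * ‖φ‖ := by
      calc α * ‖GF‖ * ‖φ‖ ≤ ‖B GF φ‖ := hle
        _ = ‖F φ‖ := by rw [hGF φ hφW]
        _ ≤ C * h * fD * ‖φ‖ := hF φ hφW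
    have h2 : α * ‖GF‖ ≤ C * h * fD := le_of_mul_le_mul_right this hφn
    calc ‖GF‖ = α⁻¹ * (α * ‖GF‖) := by field_simp
      _ ≤ α⁻¹ * (C * h * fD) := by
          exact mul_le_mul_of_nonneg_left h2 (by positivity)
      _ = C * h * α⁻¹ * fD := by ring
  refine ⟨h1, ?_⟩
  calc N GF ≤ C' * h * ‖GF‖ := hN GF hGFW
    _ ≤ C' * h * (C * h * α⁻¹ * fD) := by
        exact mul_le_mul_of_nonneg_left h1 (by positivity)
    _ = C * C' * h ^ 2 * α⁻¹ * fD := by ring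
end
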